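/- arXiv:2001.11455 — 6 statements merged into one kernel-verified Lean document; each statement's English description precedes it below -/
import Mathlib

section
/- Every real n×m matrix M with nonnegative entries and constant column sums (Σ_a M_{a,x} = 𝒞 for all x) admits a decomposition M_{a,x} = Σ_{f : Fin m → Fin n} δ_{a, f(x)} C_f with all coefficients C_f ≥ 0 and Σ_f C_f = 𝒞. -/
/-!
Normalise the columns of `M` to probability vectors `P · x = M · x / 𝒞` and take them
independent: `C f = 𝒞 * ∏ y, P (f y) y` is `𝒞` times a product measure on the functions
`f : ι → α`, and its `x`-marginal is the column `P · x`. The case `𝒞 = 0` forces `M = 0`.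
-/

open Finset

theorem sum_ite_prod_eq_mul_prod_erase {α ι R : Type*} [Fintype α] [DecidableEq α] [Fintype ι]
    [DecidableEq ι] [CommSemiring R] (M : α → ι → R) (a : α) (x : ι) :
    ∑ f : ι → α, (if a = f x then ∏ y, M (f y) y else 0) =
      M a x * ∏ y ∈ univ.erase x, ∑ b, M b y := by
  -- column `x` is cut down to its entry in row `a`, so the constraint `f x = a` becomes a factor
  let N : ι → α → R := Function.update (fun y b => M b y) x (Pi.single a (M a x))
  have hN_ne : ∀ f : ι → α, ∀ y ∈ univ.erase x, N y (f y) = M (f y) y := fun f y hy => by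
    simp [N, Function.update_of_ne (ne_of_mem_erase hy)]
  have hN : ∀ f : ι → α, (if a = f x then ∏ y, M (f y) y else 0) = ∏ y, N y (f y) := by
    intro f
    rw [← mul_prod_erase univ _ (mem_univ x),
      ← mul_prod_erase univ (fun y => N y (f y)) (mem_univ x), prod_congr rfl (hN_ne f)]
    by_cases h : a = f x
    · subst h; simp [N]
    · simp [N, h, Ne.symm h]
  rw [sum_congr rfl fun f _ => hN f, ← Fintype.prod_sum, ← mul_prod_erase univ _ (mem_univ x)]
  congr 1
  · simp [N]
  · refine prod_congr rfl fun y hy => ?_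
    simp [N, Function.update_of_ne (ne_of_mem_erase hy)]

section
variable {α ι R : Type*} [Fintype α] [Fintype ι] [DecidableEq ι] [CommSemiring R]
  {P : α → ι → R}

theorem sum_prod_apply_eq_one (hP : ∀ x, ∑ a, P a x = 1) :
    ∑ f : ι → α, ∏ y, P (f y) y = 1 := by
  simp [← Fintype.prod_sum fun y a => P a y, hP]

theorem sum_ite_prod_eq_apply [DecidableEq α] (hP : ∀ x, ∑ a, P a x = 1)
    (a : α) (x : ι) : ∑ f : ι → α, (if a = f x then ∏ y, P (f y) y else 0) = P a x := by
  simp [sum_ite_prod_eq_mul_prod_erase, hP]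

end

theorem exists_decomposition_of_sum_col_eq {α ι : Type*} [Fintype α] [DecidableEq α]
    [Fintype ι] [DecidableEq ι] [Nonempty ι] (M : α → ι → ℝ) (hM : ∀ a x, 0 ≤ M a x)
    (c : ℝ) (hc : ∀ x, ∑ a, M a x = c) :
    ∃ C : (ι → α) → ℝ, (∀ f, 0 ≤ C f) ∧ ∑ f, C f = c ∧
      ∀ a x, M a x = ∑ f : ι → α, (if a = f x then C f else 0) := by
  obtain ⟨x₀⟩ := ‹Nonempty ι›
  rcases (hc x₀ ▸ sum_nonneg fun a _ => hM a x₀ : 0 ≤ c).eq_or_lt with rfl | hc_pos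
  · have hM_zero : ∀ a x, M a x = 0 := fun a x =>
      (sum_eq_zero_iff_of_nonneg fun b _ => hM b x).mp (hc x) a (mem_univ a)
    exact ⟨0, fun _ => le_rfl, by simp, fun a x => by simp [hM_zero]⟩
  have hP : ∀ x, ∑ a, M a x / c = 1 := fun x => by rw [← sum_div, hc, div_self hc_pos.ne']
  refine ⟨fun f => c * ∏ y, M (f y) y / c, fun f => ?_, ?_, fun a x => ?_⟩
  · exact mul_nonneg hc_pos.le (prod_nonneg fun y _ => div_nonneg (hM _ _) hc_pos.le)
  · rw [← mul_sum, sum_prod_apply_eq_one hP, mul_one]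
  · simp_rw [← mul_ite_zero, ← mul_sum, sum_ite_prod_eq_apply hP,
      mul_div_cancel₀ _ hc_pos.ne']

theorem stmt1_general (n m : ℕ) (hm : 1 ≤ m)
    (M : Fin n → Fin m → ℝ) (hpos : ∀ a x, 0 ≤ M a x)
    (𝒞 : ℝ) (hsum : ∀ x, ∑ a, M a x = 𝒞) :
    ∃ C : (Fin m → Fin n) → ℝ,
      (∀ f, 0 ≤ C f) ∧
      (∑ f : Fin m → Fin n, C f) = 𝒞 ∧
      (∀ a x, M a x = ∑ f : Fin m → Fin n, (if a = f x then C f else 0)) :=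
  have : Nonempty (Fin m) := ⟨⟨0, hm⟩⟩
  exists_decomposition_of_sum_col_eq M hpos 𝒞 hsum

/-- every entrywise-nonnegative real `n × m` matrix with constant column
sums `𝒞` is a nonnegative combination of the deterministic matrices `δ_{a, f x}`,
with total weight `𝒞`. -/
theorem stmt1 (n m : ℕ) (hn : 1 ≤ n) (hm : 1 ≤ m)
    (M : Fin n → Fin m → ℝ) (hpos : ∀ a x, 0 ≤ M a x)
    (𝒞 : ℝ) (hsum : ∀ x, ∑ a, M a x = 𝒞) :
    ∃ C : (Fin m → Fin n) → ℝ,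
      (∀ f, 0 ≤ C f) ∧
      (∑ f : Fin m → Fin n, C f) = 𝒞 ∧
      (∀ a x, M a x = ∑ f : Fin m → Fin n, (if a = f x then C f else 0)) :=
  stmt1_general n m hm M hpos 𝒞 hsum
end

section
/- Every real n×m matrix M with constant column sums 𝒞 (entries allowed to be negative) admits a decomposition M_{a,x} = Σ_{f : Fin m → Fin n} δ_{a, f(x)} C_f with real coefficients satisfying Σ_f C_f = 𝒞. -/
/-!
Fix `b₀` and let `D f a x = [a = f x]`. The difference `D (update (const b₀) x a) - D (const b₀)`
is `e_a - e_{b₀}` in column `x` and zero elsewhere, with total weight `0`. Hence a matrix `M` with all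
column sums `c` equals `c • D (const b₀) + ∑ x, ∑ a, M a x • (D (update (const b₀) x a) - D (const b₀))`,
a combination whose coefficients sum to `c`.
-/

open Finset Function

section
variable {X A R : Type*} [Fintype X] [DecidableEq X] [Fintype A] [DecidableEq A] [CommRing R]

def deterministicCoeff (b₀ : A) (M : A → X → R) (c : R) (f : X → A) : R :=
  c * (if f = const X b₀ then 1 else 0) +
    ∑ x, ∑ a, M a x *
      ((if f = update (const X b₀) x a then 1 else 0) - if f = const X b₀ then 1 else 0)

theorem sum_deterministicCoeff_mul (b₀ : A) (M : A → X → R) (c : R) (w : (X → A) → R) :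
    ∑ f, deterministicCoeff b₀ M c f * w f =
      c * w (const X b₀) + ∑ x, ∑ a, M a x * (w (update (const X b₀) x a) - w (const X b₀)) := by
  simp only [deterministicCoeff, add_mul, sum_add_distrib, sum_mul, mul_assoc, sub_mul, mul_sub,
    sum_sub_distrib]
  simp_rw [sum_comm (s := (univ : Finset (X → A)))]
  simp

theorem exists_deterministic_decomposition (b₀ : A) (M : A → X → R) (c : R)
    (hsum : ∀ x, ∑ a, M a x = c) :
    ∃ C : (X → A) → R, ∑ f, C f = c ∧ ∀ a x, M a x = ∑ f, if a = f x then C f else 0 := by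
  refine ⟨deterministicCoeff b₀ M c, by simpa using sum_deterministicCoeff_mul b₀ M c 1,
    fun a y => ?_⟩
  have hentry := sum_deterministicCoeff_mul b₀ M c (fun f => if a = f y then 1 else 0)
  simp only [mul_ite, mul_one, mul_zero] at hentry
  rw [hentry, sum_eq_single y
    (fun x _ hxy => by simp only [update_of_ne hxy.symm, sub_self, mul_zero, sum_const_zero])
    (fun hy => absurd (mem_univ y) hy)]
  by_cases hab : a = b₀ <;> simp [hab, mul_sub, hsum]

end

theorem stmt2_general (n m : ℕ) (hn : 2 ≤ n)
    (M : Fin n → Fin m → ℝ)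
    (𝒞 : ℝ) (hsum : ∀ x, ∑ a, M a x = 𝒞) :
    ∃ C : (Fin m → Fin n) → ℝ,
      (∑ f : Fin m → Fin n, C f) = 𝒞 ∧
      (∀ a x, M a x = ∑ f : Fin m → Fin n, (if a = f x then C f else 0)) :=
  exists_deterministic_decomposition ⟨0, by omega⟩ M 𝒞 hsum

/-- every real `n × m` matrix with constant column sums `𝒞` (entries
possibly negative) decomposes over the deterministic matrices `δ_{a, f x}` with real
coefficients summing to `𝒞`. -/
theorem stmt2 (n m : ℕ) (hn : 2 ≤ n) (hm : 1 ≤ m)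
    (M : Fin n → Fin m → ℝ)
    (𝒞 : ℝ) (hsum : ∀ x, ∑ a, M a x = 𝒞) :
    ∃ C : (Fin m → Fin n) → ℝ,
      (∑ f : Fin m → Fin n, C f) = 𝒞 ∧
      (∀ a x, M a x = ∑ f : Fin m → Fin n, (if a = f x then C f else 0)) :=
  stmt2_general n m hn M 𝒞 hsum
end

section
/- Every no-signalling bipartite behavior P(ab|xy) admits a quasi-probability hidden variable model: there exist real coefficients q_{f,g} with Σ_{f,g} q_{f,g} = 1 such that P(ab|xy) = Σ_{f,g} δ_{a,f(x)} δ_{b,g(y)} q_{f,g}. -/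
/-!
No-signalling makes the one-party marginals `PA(a|x)`, `PB(b|y)` well defined, and
`P = PA ⊗ PB + C` where `C` has vanishing row and column sums. The product part is the behavior
of the product distribution `∏ₓ PA(f x|x) · ∏_y PB(g y|y)` on pairs of response functions. The
signed weight `Σ_{x',y'} C(f x', g y'|x', y')` reproduces `C`, scaled by the number `N` of pairs
`(f, g)` with prescribed values at `(x, y)`: every term with `x' ≠ x` or `y' ≠ y` drops out, as
`C` sums to zero over the unconstrained output. Dividing it by `N` gives the model; its
normalisation is that of `P`.
-/

open Finset

namespace HiddenVariable

section Marginal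

variable {X A : Type*} [Fintype X] [DecidableEq X] [Fintype A] [DecidableEq A]

def marginal (u : (X → A) → ℝ) (x : X) (a : A) : ℝ :=
  ∑ f : X → A, if a = f x then u f else 0

theorem marginal_add (u v : (X → A) → ℝ) (x : X) (a : A) :
    marginal (fun f => u f + v f) x a = marginal u x a + marginal v x a := by
  simp only [marginal, ite_add_zero, sum_add_distrib]

theorem marginal_const_mul (c : ℝ) (u : (X → A) → ℝ) (x : X) (a : A) :
    marginal (fun f => c * u f) x a = c * marginal u x a := by
  simp only [marginal, mul_sum, mul_ite, mul_zero]

theorem marginal_mul_const (c : ℝ) (u : (X → A) → ℝ) (x : X) (a : A) :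
    marginal (fun f => u f * c) x a = marginal u x a * c := by
  simp only [mul_comm _ c, marginal_const_mul]

theorem marginal_sum {ι : Type*} (s : Finset ι) (u : ι → (X → A) → ℝ) (x : X) (a : A) :
    marginal (fun f => ∑ i ∈ s, u i f) x a = ∑ i ∈ s, marginal (u i) x a := by
  simp only [marginal]
  rw [sum_comm]
  refine sum_congr rfl fun f _ => ?_
  split_ifs <;> simp

theorem sum_marginal (u : (X → A) → ℝ) (x : X) :
    ∑ a, marginal u x a = ∑ f, u f := by
  unfold marginal
  rw [sum_comm]
  simp

theorem marginal_prod (F : X → A → ℝ) (x : X) (a : A) :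
    marginal (fun f => ∏ x', F x' (f x')) x a = F x a * ∏ x' ∈ univ.erase x, ∑ c, F x' c := by
  -- Imposing `f x = a` amounts to replacing the factor `F x` by its point mass at `a`.
  set H := Function.update F x (Pi.single a (F x a))
  have hH : ∀ x' ∈ univ.erase x, H x' = F x' := fun x' hx' =>
    Function.update_of_ne (ne_of_mem_erase hx') _ _
  have hrestrict : ∀ f : X → A,
      (if a = f x then ∏ x', F x' (f x') else 0) = ∏ x', H x' (f x') := by
    intro f
    rw [← mul_prod_erase univ _ (mem_univ x), ← mul_prod_erase univ _ (mem_univ x),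
      prod_congr rfl fun x' hx' => congrFun (hH x' hx') (f x')]
    by_cases h : a = f x <;> simp [H, h, eq_comm]
  calc marginal (fun f => ∏ x', F x' (f x')) x a = ∑ f : X → A, ∏ x', H x' (f x') :=
        sum_congr rfl fun f _ => hrestrict f
    _ = ∏ x', ∑ c, H x' c := (Fintype.prod_sum H).symm
    _ = F x a * ∏ x' ∈ univ.erase x, ∑ c, F x' c := by
        rw [← mul_prod_erase univ _ (mem_univ x), prod_congr rfl fun x' hx' => by rw [hH x' hx']]
        simp [H]

theorem marginal_prod_of_sum_eq_one (F : X → A → ℝ) (hF : ∀ x', ∑ c, F x' c = 1) (x : X)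
    (a : A) : marginal (fun f => ∏ x', F x' (f x')) x a = F x a := by
  simp [marginal_prod, hF]

theorem marginal_apply_self (W : A → ℝ) (x : X) (a : A) :
    marginal (fun f => W (f x)) x a = Fintype.card A ^ (Fintype.card X - 1) * W a := by
  have h := marginal_prod (fun x' c => if x' = x then W c else 1) x a
  simp only [prod_ite_eq', mem_univ, if_true] at h
  rw [h, prod_congr (g := fun _ => (Fintype.card A : ℝ)) rfl fun x' hx' => by
    simp [ne_of_mem_erase hx']]
  simp [mul_comm]

theorem marginal_apply_of_ne (W : A → ℝ) (hW : ∑ c, W c = 0) {x' x : X} (hx : x' ≠ x)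
    (a : A) : marginal (fun f => W (f x')) x a = 0 := by
  have h := marginal_prod (fun x'' c => if x'' = x' then W c else 1) x a
  simp only [prod_ite_eq', mem_univ, if_true] at h
  rw [h, prod_eq_zero (mem_erase.mpr ⟨hx, mem_univ x'⟩) (by simp [hW]), mul_zero]

theorem marginal_sum_apply (C : X → A → ℝ) (hC : ∀ x', ∑ c, C x' c = 0) (x : X) (a : A) :
    marginal (fun f => ∑ x', C x' (f x')) x a
      = Fintype.card A ^ (Fintype.card X - 1) * C x a := by
  rw [marginal_sum, sum_eq_single x (fun x' _ hx' => marginal_apply_of_ne _ (hC x') hx' a)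
    (fun h => absurd (mem_univ x) h), marginal_apply_self]

end Marginal

section Behavior

variable {X Y A B : Type*} [Fintype X] [Fintype Y] [Fintype A] [Fintype B]
  [DecidableEq X] [DecidableEq Y] [DecidableEq A] [DecidableEq B]

def behavior (q : (X → A) → (Y → B) → ℝ) (a : A) (b : B) (x : X) (y : Y) : ℝ :=
  ∑ f : X → A, ∑ g : Y → B, if a = f x ∧ b = g y then q f g else 0

theorem behavior_eq_marginal_marginal (q : (X → A) → (Y → B) → ℝ) (a : A) (b : B) (x : X)
    (y : Y) :
    behavior q a b x y = marginal (fun f => marginal (q f) y b) x a := by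
  simp only [behavior, marginal, ite_and, sum_ite_irrel, sum_const_zero]

theorem sum_behavior (q : (X → A) → (Y → B) → ℝ) (x : X) (y : Y) :
    ∑ a, ∑ b, behavior q a b x y = ∑ f, ∑ g, q f g := by
  simp only [behavior_eq_marginal_marginal, ← marginal_sum, sum_marginal]

theorem behavior_add (q r : (X → A) → (Y → B) → ℝ) (a : A) (b : B) (x : X) (y : Y) :
    behavior (fun f g => q f g + r f g) a b x y = behavior q a b x y + behavior r a b x y := by
  simp only [behavior_eq_marginal_marginal, marginal_add]

theorem behavior_const_mul (c : ℝ) (q : (X → A) → (Y → B) → ℝ) (a : A) (b : B) (x : X) (y : Y) :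
    behavior (fun f g => c * q f g) a b x y = c * behavior q a b x y := by
  simp only [behavior_eq_marginal_marginal, marginal_const_mul]

theorem behavior_prod_of_sum_eq_one (F : X → A → ℝ) (G : Y → B → ℝ) (hF : ∀ x, ∑ a, F x a = 1)
    (hG : ∀ y, ∑ b, G y b = 1) (a : A) (b : B) (x : X) (y : Y) :
    behavior (fun f g => (∏ x', F x' (f x')) * ∏ y', G y' (g y')) a b x y = F x a * G y b := by
  simp only [behavior_eq_marginal_marginal, marginal_const_mul, marginal_mul_const,
    marginal_prod_of_sum_eq_one _ hF, marginal_prod_of_sum_eq_one _ hG]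

theorem behavior_sum_sum_apply (C : A → B → X → Y → ℝ) (hrow : ∀ a x y, ∑ b, C a b x y = 0)
    (hcol : ∀ b x y, ∑ a, C a b x y = 0) (a : A) (b : B) (x : X) (y : Y) :
    behavior (fun f g => ∑ x', ∑ y', C (f x') (g y') x' y') a b x y
      = Fintype.card A ^ (Fintype.card X - 1) * Fintype.card B ^ (Fintype.card Y - 1)
        * C a b x y := by
  have hinner : ∀ f : X → A, marginal (fun g => ∑ x', ∑ y', C (f x') (g y') x' y') y b
      = Fintype.card B ^ (Fintype.card Y - 1) * ∑ x', C (f x') b x' y := by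
    intro f
    simp_rw [sum_comm (s := (univ : Finset X)) (t := (univ : Finset Y))]
    rw [marginal_sum_apply (fun y' d => ∑ x', C (f x') d x' y') fun y' => by
      rw [sum_comm]; exact sum_eq_zero fun x' _ => hrow _ _ _]
  rw [behavior_eq_marginal_marginal, funext hinner, marginal_const_mul,
    marginal_sum_apply (fun x' c => C c b x' y) fun x' => hcol b x' y]
  ring

end Behavior

theorem exists_quasiprobability_model {X Y A B : Type*} [Fintype X] [Fintype Y] [Fintype A]
    [Fintype B] [DecidableEq X] [DecidableEq Y] [DecidableEq A] [DecidableEq B]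
    [Nonempty X] [Nonempty Y] (P : A → B → X → Y → ℝ)
    (hnorm : ∀ x y, ∑ a, ∑ b, P a b x y = 1)
    (hnsA : ∀ b x x' y, ∑ a, P a b x y = ∑ a, P a b x' y)
    (hnsB : ∀ a x y y', ∑ b, P a b x y = ∑ b, P a b x y') :
    ∃ q : (X → A) → (Y → B) → ℝ,
      ∑ f, ∑ g, q f g = 1 ∧ ∀ a b x y, P a b x y = behavior q a b x y := by
  obtain ⟨x₀⟩ := ‹Nonempty X›
  obtain ⟨y₀⟩ := ‹Nonempty Y›
  set PA : X → A → ℝ := fun x a => ∑ b, P a b x y₀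
  set PB : Y → B → ℝ := fun y b => ∑ a, P a b x₀ y
  set C : A → B → X → Y → ℝ := fun a b x y => P a b x y - PA x a * PB y b
  set N : ℝ := Fintype.card A ^ (Fintype.card X - 1) * Fintype.card B ^ (Fintype.card Y - 1)
  set q : (X → A) → (Y → B) → ℝ := fun f g =>
    (∏ x, PA x (f x)) * (∏ y, PB y (g y)) + N⁻¹ * ∑ x, ∑ y, C (f x) (g y) x y
  have hPA : ∀ x, ∑ a, PA x a = 1 := fun x => hnorm x y₀
  have hPB : ∀ y, ∑ b, PB y b = 1 := fun y => by rw [sum_comm]; exact hnorm x₀ y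
  have hrow : ∀ a x y, ∑ b, C a b x y = 0 := fun a x y => by
    simp only [C, sum_sub_distrib, ← mul_sum, hPB, hnsB a x y y₀, mul_one, PA, sub_self]
  have hcol : ∀ b x y, ∑ a, C a b x y = 0 := fun b x y => by
    simp only [C, sum_sub_distrib, ← sum_mul, hPA, hnsA b x x₀ y, one_mul, PB, sub_self]
  have hmodel : ∀ a b x y, P a b x y = behavior q a b x y := by
    intro a b x y
    have : Nonempty A := ⟨a⟩
    have : Nonempty B := ⟨b⟩
    have hN : N ≠ 0 := by positivity
    rw [behavior_add, behavior_const_mul, behavior_prod_of_sum_eq_one PA PB hPA hPB,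
      behavior_sum_sum_apply C hrow hcol, inv_mul_cancel_left₀ hN]
    ring
  refine ⟨q, ?_, hmodel⟩
  rw [← sum_behavior q x₀ y₀, ← hnorm x₀ y₀]
  simp only [← hmodel]

end HiddenVariable

theorem stmt9_general (n m : ℕ) (hm : 1 ≤ m)
    (P : Fin n → Fin n → Fin m → Fin m → ℝ)
    (hnorm : ∀ x y, ∑ a, ∑ b, P a b x y = 1)
    (hnsA : ∀ b x x' y, ∑ a, P a b x y = ∑ a, P a b x' y)
    (hnsB : ∀ a x y y', ∑ b, P a b x y = ∑ b, P a b x y') :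
    ∃ q : (Fin m → Fin n) → (Fin m → Fin n) → ℝ,
      (∑ f : Fin m → Fin n, ∑ g : Fin m → Fin n, q f g = 1) ∧
      (∀ a b x y, P a b x y =
        ∑ f : Fin m → Fin n, ∑ g : Fin m → Fin n,
          (if a = f x ∧ b = g y then q f g else 0)) := by
  have : Nonempty (Fin m) := ⟨⟨0, hm⟩⟩
  exact HiddenVariable.exists_quasiprobability_model P hnorm hnsA hnsB

/-- every no-signalling behavior admits a quasi-probability hidden
variable model. -/
theorem stmt9 (n m : ℕ) (hn : 1 ≤ n) (hm : 1 ≤ m)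
    (P : Fin n → Fin n → Fin m → Fin m → ℝ)
    (hpos : ∀ a b x y, 0 ≤ P a b x y)
    (hnorm : ∀ x y, ∑ a, ∑ b, P a b x y = 1)
    (hnsA : ∀ b x x' y, ∑ a, P a b x y = ∑ a, P a b x' y)
    (hnsB : ∀ a x y y', ∑ b, P a b x y = ∑ b, P a b x y') :
    ∃ q : (Fin m → Fin n) → (Fin m → Fin n) → ℝ,
      (∑ f : Fin m → Fin n, ∑ g : Fin m → Fin n, q f g = 1) ∧
      (∀ a b x y, P a b x y =
        ∑ f : Fin m → Fin n, ∑ g : Fin m → Fin n,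
          (if a = f x ∧ b = g y then q f g else 0)) :=
  stmt9_general n m hm P hnorm hnsA hnsB
end

section
/- A behavior P(ab|xy) is local (admits a nonneg hidden variable model P(ab|xy) = Σ_λ P(a|x,λ)P(b|y,λ)p(λ) with p a probability distribution and P(·|·,λ) conditional probabilities) if and only if it admits a deterministic decomposition P(ab|xy) = Σ_{f,g} δ_{a,f(x)} δ_{b,g(y)} q_{f,g} with q_{f,g} ≥ 0 and Σ q = 1. -/
/-!
A local response `x ↦ A λ x ·` is a mixture of deterministic strategies: choosing the output
for each input independently gives `f : X → α` the weight `∏ x, A λ x (f x)`, these weights sum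
to `1`, and the weight of `{f | f x = a}` is `A λ x a`. Averaging over `λ` turns a local model
into a deterministic decomposition. Conversely, a deterministic decomposition is the local model
whose hidden variable is the pair `(f, g)`, with point-mass responses.
-/

open Finset

section ProductResponses

variable {R X α : Type*} [CommSemiring R] [Fintype X] [DecidableEq X] [Fintype α]

theorem sum_prod_apply_eq_one_s10 {h : X → α → R} (hs : ∀ x, ∑ a, h x a = 1) :
    ∑ f : X → α, ∏ x, h x (f x) = 1 := by
  rw [← Fintype.prod_sum]
  simp [hs]

theorem sum_ite_prod_apply [DecidableEq α] {h : X → α → R} (hs : ∀ x, ∑ a, h x a = 1)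
    (x₀ : X) (a₀ : α) :
    ∑ f : X → α, (if a₀ = f x₀ then ∏ x, h x (f x) else 0) = h x₀ a₀ := by
  set h' : X → α → R := fun x a => if x = x₀ ∧ a ≠ a₀ then 0 else h x a
  have hprod : ∀ f : X → α, ∏ x, h' x (f x) = if a₀ = f x₀ then ∏ x, h x (f x) else 0 := by
    intro f
    split_ifs with hf
    · exact prod_congr rfl fun x _ => if_neg (by rintro ⟨rfl, hne⟩; exact hne hf.symm)
    · exact prod_eq_zero (mem_univ x₀) (if_pos ⟨rfl, Ne.symm hf⟩)
  have hsum : ∀ x, ∑ a, h' x a = if x = x₀ then h x₀ a₀ else 1 := by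
    intro x
    split_ifs with hx
    · subst hx
      simp [h', ite_not]
    · simp [h', hx, hs]
  simp_rw [← hprod, ← Fintype.prod_sum, hsum, prod_ite_eq']
  simp

end ProductResponses

theorem sum_sum_sum_mul_mul {R Λ F G : Type*} [NonUnitalSemiring R] [Fintype Λ] [Fintype F]
    [Fintype G] (c : Λ → R) (u : Λ → F → R) (v : Λ → G → R) :
    ∑ f, ∑ g, ∑ l, c l * u l f * v l g = ∑ l, c l * (∑ f, u l f) * ∑ g, v l g := by
  simp_rw [mul_assoc, sum_mul_sum, mul_sum]
  exact sum_comm_cycle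

section Models

variable {Λ Λ' X Y α β : Type*} [Fintype Λ] [Fintype Λ'] [Fintype α] [Fintype β]
  {P : α → β → X → Y → ℝ}

def IsLocalModel (P : α → β → X → Y → ℝ) (p : Λ → ℝ) (A : Λ → X → α → ℝ)
    (B : Λ → Y → β → ℝ) : Prop :=
  (∀ l, 0 ≤ p l) ∧ (∑ l, p l = 1) ∧
    (∀ l x a, 0 ≤ A l x a) ∧ (∀ l x, ∑ a, A l x a = 1) ∧
    (∀ l y b, 0 ≤ B l y b) ∧ (∀ l y, ∑ b, B l y b = 1) ∧
    (∀ a b x y, P a b x y = ∑ l, p l * A l x a * B l y b)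

theorem IsLocalModel.comp_equiv {p : Λ → ℝ} {A : Λ → X → α → ℝ} {B : Λ → Y → β → ℝ}
    (h : IsLocalModel P p A B) (e : Λ' ≃ Λ) : IsLocalModel P (p ∘ e) (A ∘ e) (B ∘ e) := by
  obtain ⟨hp, hps, hA, hAs, hB, hBs, hP⟩ := h
  refine ⟨fun l => hp (e l), ?_, fun l => hA (e l), fun l => hAs (e l), fun l => hB (e l),
    fun l => hBs (e l), fun a b x y => ?_⟩
  · rw [← hps]
    exact e.sum_comp p
  · rw [hP]
    exact (e.sum_comp fun l => p l * A l x a * B l y b).symm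

variable [Fintype X] [Fintype Y] [DecidableEq X] [DecidableEq Y] [DecidableEq α] [DecidableEq β]

def IsDeterministicModel (P : α → β → X → Y → ℝ) (q : (X → α) → (Y → β) → ℝ) : Prop :=
  (∀ f g, 0 ≤ q f g) ∧ (∑ f, ∑ g, q f g = 1) ∧
    (∀ a b x y, P a b x y = ∑ f, ∑ g, if a = f x ∧ b = g y then q f g else 0)

def deterministicWeight (p : Λ → ℝ) (A : Λ → X → α → ℝ) (B : Λ → Y → β → ℝ)
    (f : X → α) (g : Y → β) : ℝ :=
  ∑ l, p l * (∏ x, A l x (f x)) * ∏ y, B l y (g y)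

theorem IsLocalModel.isDeterministicModel {p : Λ → ℝ} {A : Λ → X → α → ℝ}
    {B : Λ → Y → β → ℝ} (h : IsLocalModel P p A B) :
    IsDeterministicModel P (deterministicWeight p A B) := by
  obtain ⟨hp, hps, hA, hAs, hB, hBs, hP⟩ := h
  refine ⟨fun f g => ?_, ?_, fun a b x y => ?_⟩
  · exact sum_nonneg fun l _ => mul_nonneg (mul_nonneg (hp l)
      (prod_nonneg fun x _ => hA l x (f x))) (prod_nonneg fun y _ => hB l y (g y))
  · simp_rw [deterministicWeight, sum_sum_sum_mul_mul, sum_prod_apply_eq_one_s10 (hAs _),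
      sum_prod_apply_eq_one_s10 (hBs _), mul_one, hps]
  · have hsplit : ∀ f g, (if a = f x ∧ b = g y then deterministicWeight p A B f g else 0) =
        ∑ l, p l * (if a = f x then ∏ x, A l x (f x) else 0) *
          (if b = g y then ∏ y, B l y (g y) else 0) := by
      intro f g
      by_cases hf : a = f x <;> by_cases hg : b = g y <;> simp [deterministicWeight, hf, hg]
    simp_rw [hP, hsplit, sum_sum_sum_mul_mul, sum_ite_prod_apply (hAs _),
      sum_ite_prod_apply (hBs _)]

def deterministicResponse (f : X → α) : X → α → ℝ := fun x a => if a = f x then 1 else 0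

theorem IsDeterministicModel.isLocalModel {q : (X → α) → (Y → β) → ℝ}
    (h : IsDeterministicModel P q) :
    IsLocalModel P (fun fg : (X → α) × (Y → β) => q fg.1 fg.2)
      (fun fg => deterministicResponse fg.1) (fun fg => deterministicResponse fg.2) := by
  obtain ⟨hq, hqs, hP⟩ := h
  refine ⟨fun fg => hq fg.1 fg.2, ?_, ?_, ?_, ?_, ?_, fun a b x y => ?_⟩
  · rwa [Fintype.sum_prod_type']
  · intro fg x a
    unfold deterministicResponse
    positivity
  · simp [deterministicResponse]
  · intro fg y b
    unfold deterministicResponse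
    positivity
  · simp [deterministicResponse]
  · rw [hP, ← Fintype.sum_prod_type']
    refine sum_congr rfl fun fg _ => ?_
    by_cases ha : a = fg.1 x <;> by_cases hb : b = fg.2 y <;> simp [deterministicResponse, ha, hb]

end Models

/-- a behavior is local (admits a hidden variable model with
probability weights and local response distributions) iff it admits a deterministic
decomposition with a genuine (nonnegative) probability `q` over pairs of functions. -/
theorem stmt10 (n m : ℕ)
    (P : Fin n → Fin n → Fin m → Fin m → ℝ) :
    (∃ (k : ℕ) (p : Fin k → ℝ) (A B : Fin k → Fin m → Fin n → ℝ),
      (∀ l, 0 ≤ p l) ∧ (∑ l, p l = 1) ∧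
      (∀ l x a, 0 ≤ A l x a) ∧ (∀ l x, ∑ a, A l x a = 1) ∧
      (∀ l y b, 0 ≤ B l y b) ∧ (∀ l y, ∑ b, B l y b = 1) ∧
      (∀ a b x y, P a b x y = ∑ l, p l * A l x a * B l y b)) ↔
    (∃ q : (Fin m → Fin n) → (Fin m → Fin n) → ℝ,
      (∀ f g, 0 ≤ q f g) ∧
      (∑ f : Fin m → Fin n, ∑ g : Fin m → Fin n, q f g = 1) ∧
      (∀ a b x y, P a b x y =
        ∑ f : Fin m → Fin n, ∑ g : Fin m → Fin n,
          (if a = f x ∧ b = g y then q f g else 0))) := by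
  constructor
  · rintro ⟨k, p, A, B, h⟩
    exact ⟨_, IsLocalModel.isDeterministicModel h⟩
  · rintro ⟨q, h⟩
    exact ⟨_, _, _, _,
      (IsDeterministicModel.isLocalModel h).comp_equiv (Fintype.equivFin _).symm⟩
end

section
/- The PR box is non-local: there is no nonnegative q : (Fin 2 → Fin 2) → (Fin 2 → Fin 2) → ℝ with Σ q = 1 such that (1/2)·δ_{a⊕b,xy} = Σ_{f,g} δ_{a,f(x)} δ_{b,g(y)} q_{f,g}. -/
/-!
No deterministic strategy wins the CHSH game: `f x + g y = x * y` for all four input pairs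
would give, after summing, `2 * (f 0 + f 1 + g 0 + g 1) = 1` in `ZMod 2`. Hence every pair
`(f, g)` produces some outcome `(f x, g y)` to which the PR box assigns probability `0`, so a
nonnegative hidden variable model must give `(f, g)` weight `0`, contradicting `∑ q = 1`.
-/

theorem ZMod.exists_add_ne_mul (f g : ZMod 2 → ZMod 2) : ∃ x y, f x + g y ≠ x * y := by
  by_contra! h
  have : (1 : ZMod 2) = 0 := by
    linear_combination (norm := ring_nf) h 1 1 - h 0 0 - h 0 1 - h 1 0
    reduce_mod_char
  exact absurd this (by decide)

theorem le_sum_sum_ite_of_nonneg {ι κ M : Type*} [Fintype ι] [Fintype κ] [AddCommMonoid M]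
    [PartialOrder M] [IsOrderedAddMonoid M] {q : ι → κ → M} (hq : ∀ i j, 0 ≤ q i j)
    (p : ι → κ → Prop) [∀ i j, Decidable (p i j)] {i : ι} {j : κ} (hij : p i j) :
    q i j ≤ ∑ i', ∑ j', if p i' j' then q i' j' else 0 := by
  have hterm : ∀ i' j', 0 ≤ if p i' j' then q i' j' else 0 := fun i' j' => by
    split_ifs
    exacts [hq i' j', le_rfl]
  calc q i j = if p i j then q i j else 0 := (if_pos hij).symm
    _ ≤ ∑ j', if p i j' then q i j' else 0 :=
      Finset.single_le_sum (fun j' _ => hterm i j') (Finset.mem_univ j)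
    _ ≤ ∑ i', ∑ j', if p i' j' then q i' j' else 0 :=
      Finset.single_le_sum (fun i' _ => Finset.sum_nonneg fun j' _ => hterm i' j')
        (Finset.mem_univ i)

/-- the PR box is non-local: it admits no deterministic hidden variable
model with nonnegative weights. -/
theorem stmt13 :
    ¬ ∃ q : (ZMod 2 → ZMod 2) → (ZMod 2 → ZMod 2) → ℝ,
      (∀ f g, 0 ≤ q f g) ∧
      (∑ f : ZMod 2 → ZMod 2, ∑ g : ZMod 2 → ZMod 2, q f g = 1) ∧
      (∀ a b x y : ZMod 2,
        (if a + b = x * y then (1 / 2 : ℝ) else 0) =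
          ∑ f : ZMod 2 → ZMod 2, ∑ g : ZMod 2 → ZMod 2,
            (if a = f x ∧ b = g y then q f g else 0)) := by
  rintro ⟨q, hq, hsum, hP⟩
  have hzero : ∀ f g, q f g = 0 := fun f g => by
    obtain ⟨x, y, hlose⟩ := ZMod.exists_add_ne_mul f g
    have hbox := hP (f x) (g y) x y
    rw [if_neg hlose] at hbox
    refine le_antisymm ?_ (hq f g)
    rw [hbox]
    exact le_sum_sum_ite_of_nonneg hq (fun f' g' => f x = f' x ∧ g y = g' y) ⟨rfl, rfl⟩
  simp [hzero] at hsum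
end

section
/- With U, S, V defined by U_{(a,x),(a',x')} = R_{a,a'} 𝓡^{a'}_{x,x'}, S_{(a,x),(a_1,…,a_m)} = √(n^{m−1})·[√m·δ_{0,a}δ_{1,x} + 1 − δ_{0,a}]·δ_{a,a_x}·Π_{y≠x} δ_{0,a_y}, and V = R ⊗ ⋯ ⊗ R (m factors), one has the exact factorization δ_{a,a_x} = Σ_{a',x'} Σ_{a'_1…a'_m} U_{(a,x),(a',x')} S_{(a',x'),(a'_1…a'_m)} V_{(a_1…a_m),(a'_1…a'_m)}, where R is the correlation-basis rotation (with n replaced by m in 𝓡) and 𝓡^{a}_{x,y} = δ_{0,a} R_{x,y} + (1−δ_{0,a}) δ_{x,y}. -/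
/-- The correlation-basis rotation matrix `R` on `Fin k`. -/
noncomputable def corrR (k : ℕ) (a b : Fin k) : ℝ :=
  if b.val = 0 then 1 / Real.sqrt k
  else if a.val < b.val then 1 / Real.sqrt (b.val * (b.val + 1))
  else if a = b then -(b.val : ℝ) / Real.sqrt (b.val * (b.val + 1))
  else 0

/-- The controlled rotation `𝓡`: rotates by `R` when the control is `0`, otherwise
acts as the identity. -/
noncomputable def ctrlR (n m : ℕ) (a : Fin n) (x y : Fin m) : ℝ :=
  if a.val = 0 then corrR m x y else (if x = y then 1 else 0)

/-- The left singular-vector matrix `U` of the deterministic tensor. -/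
noncomputable def Umat (n m : ℕ) (p p' : Fin n × Fin m) : ℝ :=
  corrR n p.1 p'.1 * ctrlR n m p'.1 p.2 p'.2

/-- The quasi-diagonal singular-value matrix `S` of the deterministic tensor. -/
noncomputable def Smat (n m : ℕ) (p : Fin n × Fin m) (avec : Fin m → Fin n) : ℝ :=
  Real.sqrt ((n : ℝ) ^ (m - 1)) *
    ((if p.1.val = 0 ∧ p.2.val = 0 then Real.sqrt m else 0)
      + 1 - (if p.1.val = 0 then 1 else 0)) *
    (if p.1 = avec p.2 then 1 else 0) *
    ∏ y ∈ Finset.univ.erase p.2, (if (avec y).val = 0 then 1 else 0)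

/-- The right singular-vector matrix `V = R ⊗ ⋯ ⊗ R` (`m` factors). -/
noncomputable def Vmat (n m : ℕ) (avec avec' : Fin m → Fin n) : ℝ :=
  ∏ i, corrR n (avec i) (avec' i)

/-! `U S Vᵀ` is evaluated from the right. Each row of `S` has a single nonzero entry, at the
multi-index with `a'` in slot `x'` and `0` elsewhere, and there the scale `√(n ^ (m - 1))` cancels
the `m - 1` factors `R_{·,0} = 1 / √n` of `V`. Summing against `U` over `x'` then leaves only
`x' = x` when `a' ≠ 0`, and only `x' = 0` when `a' = 0`, where `√m · R_{x,0} = 1` and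
`R_{a_0,0} = R_{a_x,0}`. What remains is `∑_{a'} R_{a,a'} R_{a_x,a'}`, an entry of `R Rᵀ = 1`:
`R` is orthogonal because column `b > 0` is proportional to `(1, …, 1, -b, 0, …, 0)`, which sums
to zero and is constant on the support of every earlier column. -/

open Finset

lemma Fin.sum_ite_lt_ite_eq {M : Type*} [AddCommMonoid M] {k c : ℕ} (hc : c < k) (t u : M) :
    ∑ a : Fin k, (if a.val < c then t else if a.val = c then u else 0) = c • t + u := by
  rw [Fin.sum_univ_eq_sum_range (fun i => if i < c then t else if i = c then u else 0),
    ← sum_range_add_sum_Ico _ (Nat.succ_le_of_lt hc), sum_range_succ,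
    sum_eq_zero (s := Ico _ _) fun i hi => ?_]
  · simp +contextual [sum_ite_of_true]
  · have hci : c + 1 ≤ i := (mem_Ico.1 hi).1
    simp [show ¬ i < c by omega, show i ≠ c by omega]

section CorrelationBasis

variable {k : ℕ}

lemma corrR_of_val_eq_zero (a : Fin k) {b : Fin k} (hb : b.val = 0) :
    corrR k a b = 1 / √k := by
  simp [corrR, hb]

lemma corrR_of_lt {a b : Fin k} (h : a.val < b.val) :
    corrR k a b = 1 / √(b.val * (b.val + 1)) := by
  simp [corrR, h, Nat.ne_zero_of_lt h]

lemma corrR_of_val_ne_zero (a : Fin k) {b : Fin k} (hb : b.val ≠ 0) :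
    corrR k a b = if a.val < b.val then 1 / √(b.val * (b.val + 1))
      else if a.val = b.val then -(b.val : ℝ) / √(b.val * (b.val + 1)) else 0 := by
  simp [corrR, hb, Fin.ext_iff]

lemma sum_corrR_of_val_ne_zero {b : Fin k} (hb : b.val ≠ 0) : ∑ a, corrR k a b = 0 := by
  simp_rw [corrR_of_val_ne_zero _ hb]
  rw [Fin.sum_ite_lt_ite_eq b.isLt, nsmul_eq_mul]
  ring

lemma sum_corrR_mul_self (b : Fin k) : ∑ a, corrR k a b * corrR k a b = 1 := by
  have hk : (k : ℝ) ≠ 0 := by exact_mod_cast b.pos.ne'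
  by_cases hb : b.val = 0
  · simp_rw [corrR_of_val_eq_zero _ hb, sum_const, card_univ, Fintype.card_fin, nsmul_eq_mul]
    field_simp
    rw [Real.sq_sqrt (Nat.cast_nonneg k)]
  · have hpos : (0 : ℝ) < b.val * (b.val + 1) := by positivity
    have hsq : ∀ a : Fin k, corrR k a b * corrR k a b =
        if a.val < b.val then 1 / ((b.val : ℝ) * (b.val + 1))
        else if a.val = b.val then (b.val : ℝ) ^ 2 / (b.val * (b.val + 1)) else 0 := by
      intro a
      rw [corrR_of_val_ne_zero a hb]
      split_ifs <;> simp only [div_mul_div_comm, Real.mul_self_sqrt hpos.le, mul_zero] <;> ring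
    rw [sum_congr rfl fun a _ => hsq a, Fin.sum_ite_lt_ite_eq b.isLt, nsmul_eq_mul]
    field_simp
    ring

lemma sum_corrR_mul_of_lt {b b' : Fin k} (h : b.val < b'.val) :
    ∑ a, corrR k a b * corrR k a b' = 0 := by
  by_cases hb : b.val = 0
  · simp_rw [corrR_of_val_eq_zero _ hb, ← mul_sum, sum_corrR_of_val_ne_zero (by omega : b'.val ≠ 0),
      mul_zero]
  · have hconst : ∀ a : Fin k, corrR k a b * corrR k a b' =
        corrR k a b * (1 / √(b'.val * (b'.val + 1))) := by
      intro a
      rcases lt_or_ge b.val a.val with hab | hab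
      · simp [corrR_of_val_ne_zero a hb, hab.not_gt, hab.ne']
      · rw [corrR_of_lt (b := b') (by omega)]
    simp_rw [hconst, ← sum_mul, sum_corrR_of_val_ne_zero hb, zero_mul]

lemma corrR_mem_orthogonalGroup : Matrix.of (corrR k) ∈ Matrix.orthogonalGroup (Fin k) ℝ := by
  rw [Matrix.mem_orthogonalGroup_iff']
  ext b b'
  simp only [Matrix.mul_apply, Matrix.transpose_apply, Matrix.of_apply, Matrix.one_apply]
  rcases lt_trichotomy b.val b'.val with h | h | h
  · rw [sum_corrR_mul_of_lt h, if_neg (Fin.ne_of_lt h)]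
  · rw [Fin.ext h, sum_corrR_mul_self, if_pos rfl]
  · simp_rw [mul_comm (corrR k _ b)]
    rw [sum_corrR_mul_of_lt h, if_neg (Fin.ne_of_gt h)]

lemma sum_corrR_mul_corrR (a a' : Fin k) :
    ∑ b, corrR k a b * corrR k a' b = if a = a' then 1 else 0 := by
  have := congr_fun₂ ((Matrix.mem_orthogonalGroup_iff _ _).1 corrR_mem_orthogonalGroup) a a'
  simpa [Matrix.mul_apply, Matrix.one_apply] using this

end CorrelationBasis

lemma boole_mul_prod_erase_boole_eq_boole_pi_single {ι M R : Type*} [Fintype ι] [DecidableEq ι]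
    [Zero M] [DecidableEq M] [CommMonoidWithZero R] (v : ι → M) (i : ι) (x : M) :
    ((if x = v i then 1 else 0) * ∏ j ∈ univ.erase i, (if v j = 0 then 1 else 0) : R) =
      if v = Pi.single i x then 1 else 0 := by
  have key : (x = v i ∧ ∀ j ∈ univ.erase i, v j = 0) ↔ v = Pi.single i x := by
    rw [Pi.single, @eq_comm _ v, Function.update_eq_iff]
    simp [eq_comm]
  simp only [prod_boole, boole_mul, ← ite_and, key]

lemma sqrt_pow_mul_one_div_sqrt_pow {x : ℝ} (hx : 0 < x) (j : ℕ) :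
    √(x ^ j) * (1 / √x) ^ j = 1 := by
  have hpow : √(x ^ j) = √x ^ j := (Real.sqrt_eq_iff_eq_sq (by positivity) (by positivity)).2 <| by
    rw [← pow_mul, mul_comm, pow_mul, Real.sq_sqrt hx.le]
  rw [hpow, ← mul_pow, mul_one_div_cancel (Real.sqrt_pos.2 hx).ne', one_pow]

noncomputable def singularWeight (n m : ℕ) (a : Fin n) (x : Fin m) : ℝ :=
  (if a.val = 0 ∧ x.val = 0 then √m else 0) + 1 - (if a.val = 0 then 1 else 0)

section Factorization

variable {n m : ℕ}

lemma Smat_eq [NeZero n] (a' : Fin n) (x' : Fin m) (v : Fin m → Fin n) :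
    Smat n m (a', x') v =
      √((n : ℝ) ^ (m - 1)) * singularWeight n m a' x' * if v = Pi.single x' a' then 1 else 0 := by
  simp only [Smat, singularWeight, Fin.val_eq_zero_iff, mul_assoc]
  rw [boole_mul_prod_erase_boole_eq_boole_pi_single]

lemma Vmat_pi_single [NeZero n] (v : Fin m → Fin n) (a' : Fin n) (x' : Fin m) :
    Vmat n m v (Pi.single x' a') = corrR n (v x') a' * (1 / √n) ^ (m - 1) := by
  rw [Vmat, ← mul_prod_erase _ _ (mem_univ x'), Pi.single_eq_same,
    prod_congr rfl fun y hy => by rw [Pi.single_eq_of_ne (ne_of_mem_erase hy),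
      corrR_of_val_eq_zero _ (Fin.val_zero n)], prod_const, card_erase_of_mem (mem_univ _),
    card_univ, Fintype.card_fin]

lemma sum_Smat_mul_Vmat [NeZero n] (v : Fin m → Fin n) (a' : Fin n) (x' : Fin m) :
    ∑ v', Smat n m (a', x') v' * Vmat n m v v' = singularWeight n m a' x' * corrR n (v x') a' := by
  rw [Fintype.sum_eq_single (Pi.single x' a') fun v' hv' => by simp [Smat_eq, hv'], Smat_eq,
    if_pos rfl, Vmat_pi_single]
  linear_combination singularWeight n m a' x' * corrR n (v x') a' *
    sqrt_pow_mul_one_div_sqrt_pow (Nat.cast_pos.2 (NeZero.pos n)) (m - 1)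

lemma sum_Umat_mul_singularWeight_mul_corrR [NeZero m] (a : Fin n) (x : Fin m)
    (v : Fin m → Fin n) (a' : Fin n) :
    ∑ x', Umat n m (a, x) (a', x') * (singularWeight n m a' x' * corrR n (v x') a') =
      corrR n a a' * corrR n (v x) a' := by
  simp only [Umat, ctrlR, singularWeight]
  by_cases ha' : a'.val = 0
  · rw [Fintype.sum_eq_single 0 fun x' hx' => by simp [ha', Fin.val_eq_zero_iff, hx']]
    simp only [ha', corrR_of_val_eq_zero _ ha', corrR_of_val_eq_zero _ (Fin.val_zero m),
      Fin.val_zero, and_self, if_true, add_sub_cancel_right]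
    have : (0 : ℝ) < √m := Real.sqrt_pos.2 (by exact_mod_cast NeZero.pos m)
    field_simp
  · simp [ha']

end Factorization

theorem stmt18_general (n m : ℕ) :
    ∀ (a : Fin n) (x : Fin m) (avec : Fin m → Fin n),
      (if a = avec x then (1 : ℝ) else 0) =
        ∑ a' : Fin n, ∑ x' : Fin m, ∑ avec' : Fin m → Fin n,
          Umat n m (a, x) (a', x') * Smat n m (a', x') avec' * Vmat n m avec avec' := by
  intro a x v
  have : NeZero n := NeZero.of_pos a.pos
  have : NeZero m := NeZero.of_pos x.pos
  simp_rw [mul_assoc, ← mul_sum, sum_Smat_mul_Vmat, sum_Umat_mul_singularWeight_mul_corrR,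
    sum_corrR_mul_corrR]

/-- exact singular value decomposition `D = U S Vᵀ` of the
deterministic tensor `D_{(a,x),(a₁…a_m)} = δ_{a,a_x}`. -/
theorem stmt18 (n m : ℕ) (hn : 1 ≤ n) (hm : 1 ≤ m) :
    ∀ (a : Fin n) (x : Fin m) (avec : Fin m → Fin n),
      (if a = avec x then (1 : ℝ) else 0) =
        ∑ a' : Fin n, ∑ x' : Fin m, ∑ avec' : Fin m → Fin n,
          Umat n m (a, x) (a', x') * Smat n m (a', x') avec' * Vmat n m avec avec' :=
  stmt18_general n m
end
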